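/- arXiv:1703.09732 — 2 statements merged into one kernel-verified Lean document; each statement's English description precedes it below -/
import Mathlib

section
/- Let H1 be a d-regular graph on n1 vertices and H2 a graph on n2 vertices with maximum degree at most k. Let H be the join of H1 and H2 (every vertex of H1 adjacent to every vertex of H2). Then the largest eigenvalue of the adjacency matrix of H is at most the largest eigenvalue of the 2x2 matrix [[d, n2],[n1, k]]. -/
/-! For an eigenvector `x = (y, z)` of the join, the quadratic form splits as
`x ⬝ A x = y ⬝ A₁ y + z ⬝ A₂ z + 2 (∑ y) (∑ z)`. The first two terms are at most `d ‖y‖²` and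
`k ‖z‖²` because the Laplacian is positive semidefinite, and Cauchy–Schwarz gives
`(∑ y)² ≤ n₁ ‖y‖²`, `(∑ z)² ≤ n₂ ‖z‖²`. The top eigenvalue `μ` of `!![d, n₂; n₁, k]` satisfies
`(μ - d) (μ - k) = n₁ n₂`, so AM–GM bounds the cross term by `(μ - d) ‖y‖² + (μ - k) ‖z‖²`,
whence `x ⬝ A x ≤ μ ‖x‖²`. -/

open SimpleGraph Finset

attribute [local instance] Classical.propDecidable

/-- The largest eigenvalue of a real matrix, as the supremum of its eigenvalues. -/
noncomputable def lam1 {V : Type*} [Fintype V] (A : Matrix V V ℝ) : ℝ :=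
  sSup {t : ℝ | ∃ x : V → ℝ, x ≠ 0 ∧ A.mulVec x = t • x}

/-- The join of two simple graphs: all edges of both graphs plus all edges between them. -/
def SimpleGraph.join {α β : Type*} (G : SimpleGraph α) (H : SimpleGraph β) :
    SimpleGraph (α ⊕ β) where
  Adj x y :=
    match x, y with
    | Sum.inl a, Sum.inl b => G.Adj a b
    | Sum.inr a, Sum.inr b => H.Adj a b
    | Sum.inl _, Sum.inr _ => True
    | Sum.inr _, Sum.inl _ => True
  symm := by constructor; rintro (a | a) (b | b) h
             · exact G.adj_symm h
             · trivial
             · trivial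
             · exact H.adj_symm h
  loopless := by constructor; rintro (a | a) h
                 · exact G.irrefl h
                 · exact H.irrefl h

open Matrix

/-- The larger root of `(t - a) * (t - e) = b * c`. -/
noncomputable def perronRoot (a b c e : ℝ) : ℝ :=
  (a + e + √((a - e) ^ 2 + 4 * (b * c))) / 2

section perronRoot

variable {a b c e : ℝ}

lemma perronRoot_sub_mul_sub (hbc : 0 ≤ b * c) :
    (perronRoot a b c e - a) * (perronRoot a b c e - e) = b * c := by
  have hsq := Real.sq_sqrt (by positivity : 0 ≤ (a - e) ^ 2 + 4 * (b * c))
  unfold perronRoot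
  linear_combination hsq / 4

lemma max_le_perronRoot (hbc : 0 ≤ b * c) : max a e ≤ perronRoot a b c e := by
  have habs : |a - e| ≤ √((a - e) ^ 2 + 4 * (b * c)) := by
    rw [← Real.sqrt_sq_eq_abs]
    exact Real.sqrt_le_sqrt (by linarith)
  unfold perronRoot
  cases abs_le.mp habs
  exact max_le (by linarith) (by linarith)

end perronRoot

lemma lam1_le_of_dotProduct_mulVec_le {V : Type*} [Fintype V] {A : Matrix V V ℝ} {μ : ℝ}
    (hμ : 0 ≤ μ) (h : ∀ x, x ⬝ᵥ (A *ᵥ x) ≤ μ * (x ⬝ᵥ x)) : lam1 A ≤ μ := by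
  refine Real.sSup_le ?_ hμ
  rintro t ⟨x, hx0, hx⟩
  have hpos : 0 < x ⬝ᵥ x := by simpa using dotProduct_self_star_pos_iff.mpr hx0
  have := h x
  rw [hx, dotProduct_smul, smul_eq_mul] at this
  exact le_of_mul_le_mul_right this hpos

lemma exists_mulVec_fin_two_eq_smul_iff (a b c e t : ℝ) :
    (∃ x : Fin 2 → ℝ, x ≠ 0 ∧ !![a, b; c, e] *ᵥ x = t • x) ↔ (t - a) * (t - e) = b * c := by
  have hshift : !![a, b; c, e] - t • 1 = !![a - t, b; c, e - t] := by
    ext i j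
    fin_cases i <;> fin_cases j <;> simp
  have hdet : (!![a, b; c, e] - t • 1).det = (t - a) * (t - e) - b * c := by
    rw [hshift, det_fin_two_of]
    ring
  rw [← sub_eq_zero, ← hdet, ← exists_mulVec_eq_zero_iff]
  simp only [sub_mulVec, smul_mulVec, one_mulVec, sub_eq_zero]

lemma lam1_fin_two {a b c e : ℝ} (hbc : 0 ≤ b * c) :
    lam1 !![a, b; c, e] = perronRoot a b c e := by
  refine IsGreatest.csSup_eq ⟨?_, ?_⟩
  · exact (exists_mulVec_fin_two_eq_smul_iff ..).mpr (perronRoot_sub_mul_sub hbc)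
  · rintro t ht
    have hroot := (exists_mulVec_fin_two_eq_smul_iff ..).mp ht
    have hμ := perronRoot_sub_mul_sub (a := a) (e := e) hbc
    have hmax := max_le_perronRoot (a := a) (e := e) hbc
    -- the other root of the characteristic polynomial is `a + e - perronRoot a b c e`
    have hfac : (t - perronRoot a b c e) * (t - (a + e - perronRoot a b c e)) = 0 := by
      linear_combination hroot - hμ
    rcases mul_eq_zero.mp hfac with h | h
    · linarith
    · linarith [le_max_left a e, le_max_right a e]

namespace SimpleGraph

lemma dotProduct_adjMatrix_mulVec_le {V : Type*} [Fintype V] (G : SimpleGraph V)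
    [DecidableRel G.Adj] {k : ℕ} (hk : ∀ v, G.degree v ≤ k) (x : V → ℝ) :
    x ⬝ᵥ (G.adjMatrix ℝ *ᵥ x) ≤ k * (x ⬝ᵥ x) := by
  classical
  have hlap : 0 ≤ x ⬝ᵥ (G.lapMatrix ℝ *ᵥ x) := by
    simpa using (G.posSemidef_lapMatrix ℝ).dotProduct_mulVec_nonneg x
  rw [lapMatrix, sub_mulVec, dotProduct_sub, dotProduct_mulVec_degMatrix] at hlap
  calc x ⬝ᵥ (G.adjMatrix ℝ *ᵥ x) ≤ ∑ v, (G.degree v : ℝ) * (x v * x v) := by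
        simp only [← mul_assoc]; linarith
    _ ≤ ∑ v, (k : ℝ) * (x v * x v) := by
        gcongr with v
        · exact mul_self_nonneg _
        · exact_mod_cast hk v
    _ = k * (x ⬝ᵥ x) := by rw [dotProduct, Finset.mul_sum]

variable {α β : Type*} (G : SimpleGraph α) (H : SimpleGraph β)

@[simp]
lemma join_adj_inl_inl (a b : α) : (G.join H).Adj (.inl a) (.inl b) ↔ G.Adj a b := .rfl

@[simp]
lemma join_adj_inr_inr (a b : β) : (G.join H).Adj (.inr a) (.inr b) ↔ H.Adj a b := .rfl

@[simp]
lemma join_adj_inl_inr (a : α) (b : β) : (G.join H).Adj (.inl a) (.inr b) := trivial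

@[simp]
lemma join_adj_inr_inl (a : β) (b : α) : (G.join H).Adj (.inr a) (.inl b) := trivial

variable [Fintype α] [Fintype β] [DecidableRel G.Adj] [DecidableRel H.Adj]
  [DecidableRel (G.join H).Adj]

lemma dotProduct_join_adjMatrix_mulVec (y : α → ℝ) (z : β → ℝ) :
    Sum.elim y z ⬝ᵥ ((G.join H).adjMatrix ℝ *ᵥ Sum.elim y z) =
      y ⬝ᵥ (G.adjMatrix ℝ *ᵥ y) + z ⬝ᵥ (H.adjMatrix ℝ *ᵥ z) + 2 * ((∑ a, y a) * ∑ b, z b) := by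
  have hcross : ∑ b, ∑ a, z b * y a = ∑ a, ∑ b, y a * z b := by
    rw [Finset.sum_comm]
    simp only [mul_comm]
  simp only [dotProduct_mulVec_adjMatrix, Fintype.sum_sum_type, join_adj_inl_inl,
    join_adj_inr_inr, join_adj_inl_inr, join_adj_inr_inl, if_true, Sum.elim_inl, Sum.elim_inr,
    Finset.sum_add_distrib, hcross, Finset.sum_mul_sum]
  ring

lemma dotProduct_join_adjMatrix_mulVec_le {d k : ℕ} (hd : ∀ v, G.degree v ≤ d)
    (hk : ∀ v, H.degree v ≤ k) (x : α ⊕ β → ℝ) :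
    x ⬝ᵥ ((G.join H).adjMatrix ℝ *ᵥ x) ≤
      perronRoot d (Fintype.card β) (Fintype.card α) k * (x ⬝ᵥ x) := by
  set μ := perronRoot d (Fintype.card β) (Fintype.card α) k
  have hμ : (μ - d) * (μ - k) = Fintype.card β * Fintype.card α :=
    perronRoot_sub_mul_sub (by positivity)
  have hμmax : max (d : ℝ) k ≤ μ := max_le_perronRoot (by positivity)
  obtain ⟨y, z, rfl⟩ : ∃ y z, x = Sum.elim y z := ⟨_, _, (Sum.elim_comp_inl_inr x).symm⟩
  have hy : (∑ a, y a) ^ 2 ≤ Fintype.card α * (y ⬝ᵥ y) := by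
    simpa [dotProduct, ← sq] using sq_sum_le_card_mul_sum_sq (s := Finset.univ) (f := y)
  have hz : (∑ b, z b) ^ 2 ≤ Fintype.card β * (z ⬝ᵥ z) := by
    simpa [dotProduct, ← sq] using sq_sum_le_card_mul_sum_sq (s := Finset.univ) (f := z)
  have hyy : 0 ≤ y ⬝ᵥ y := by simpa using dotProduct_self_star_nonneg y
  have hzz : 0 ≤ z ⬝ᵥ z := by simpa using dotProduct_self_star_nonneg z
  have hcross : 2 * ((∑ a, y a) * ∑ b, z b) ≤ (μ - d) * (y ⬝ᵥ y) + (μ - k) * (z ⬝ᵥ z) := by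
    refine two_mul_le_add_of_sq_le_mul ?_ ?_ ?_
    · exact mul_nonneg (by linarith [le_max_left (d : ℝ) k]) hyy
    · exact mul_nonneg (by linarith [le_max_right (d : ℝ) k]) hzz
    calc ((∑ a, y a) * ∑ b, z b) ^ 2 = (∑ a, y a) ^ 2 * (∑ b, z b) ^ 2 := mul_pow ..
      _ ≤ (Fintype.card α * (y ⬝ᵥ y)) * (Fintype.card β * (z ⬝ᵥ z)) :=
          mul_le_mul hy hz (sq_nonneg _) (by positivity)
      _ = (μ - d) * (y ⬝ᵥ y) * ((μ - k) * (z ⬝ᵥ z)) := by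
          linear_combination (y ⬝ᵥ y) * (z ⬝ᵥ z) * hμ.symm
  have hxx : Sum.elim y z ⬝ᵥ Sum.elim y z = y ⬝ᵥ y + z ⬝ᵥ z := by
    simp only [dotProduct, Fintype.sum_sum_type, Sum.elim_inl, Sum.elim_inr]
  rw [dotProduct_join_adjMatrix_mulVec, hxx]
  linarith [G.dotProduct_adjMatrix_mulVec_le hd y, H.dotProduct_adjMatrix_mulVec_le hk z]

end SimpleGraph

theorem stmt0 {V₁ V₂ : Type*} [Fintype V₁] [Fintype V₂]
    (H₁ : SimpleGraph V₁) (H₂ : SimpleGraph V₂) (d k n₁ n₂ : ℕ)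
    (hn₁ : Fintype.card V₁ = n₁) (hn₂ : Fintype.card V₂ = n₂)
    (hreg : H₁.IsRegularOfDegree d) (hdeg : ∀ v, H₂.degree v ≤ k) :
    lam1 ((H₁.join H₂).adjMatrix ℝ) ≤ lam1 !![(d : ℝ), (n₂ : ℝ); (n₁ : ℝ), (k : ℝ)] := by
  subst hn₁ hn₂
  have hbc : (0 : ℝ) ≤ Fintype.card V₂ * Fintype.card V₁ := by positivity
  rw [lam1_fin_two hbc]
  have hμ : (0 : ℝ) ≤ perronRoot d (Fintype.card V₂) (Fintype.card V₁) k :=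
    (le_max_of_le_left d.cast_nonneg).trans (max_le_perronRoot hbc)
  exact lam1_le_of_dotProduct_mulVec_le hμ
    (H₁.dotProduct_join_adjMatrix_mulVec_le H₂ (fun v => (hreg v).le) hdeg)
end

section
/- Let G be a connected finite simple graph, A its adjacency matrix, lambda its largest eigenvalue, and x a corresponding eigenvector with strictly positive entries normalized so that its maximum entry is 1 attained at a vertex z. Suppose H is obtained from G by deleting all edges incident to a vertex u (with u != z and u not adjacent to z) and adding the single edge uz. If the sum of x_v over neighbors v of u in G is strictly less than x_z = 1, then the largest eigenvalue of the adjacency matrix of H is strictly greater than lambda. -/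
/-!
With `A`, `B` the adjacency matrices of `G` and `H`, the rewiring changes only row and column `u`:
`B = A + e_u fᵀ + f e_uᵀ` with `f = e_z - A_u`. Hence
`xᵀ B x = xᵀ A x + 2 x_u (x_z - ∑_{v ~ u} x_v) > λ xᵀ x`, while `xᵀ B x ≤ λ₁(B) xᵀ x` because
`λ₁(B) • 1 - B` is positive semidefinite.
-/

open SimpleGraph Finset

attribute [local instance] Classical.propDecidable

open Matrix

section lam1

variable {V : Type*} [Fintype V] [DecidableEq V] {B : Matrix V V ℝ}

lemma mem_spectrum_of_mulVec_eq_smul {t : ℝ} {y : V → ℝ} (hy : y ≠ 0) (h : B *ᵥ y = t • y) :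
    t ∈ spectrum ℝ B := by
  rw [← spectrum_toLin']
  exact (Module.End.hasEigenvalue_of_hasEigenvector
    (Module.End.hasEigenvector_iff.mpr ⟨by simpa [toLin'_apply] using h, hy⟩)).mem_spectrum

lemma le_lam1_of_mulVec_eq_smul {t : ℝ} {y : V → ℝ} (hy : y ≠ 0) (h : B *ᵥ y = t • y) :
    t ≤ lam1 B := by
  have hbdd : BddAbove {t : ℝ | ∃ y : V → ℝ, y ≠ 0 ∧ B *ᵥ y = t • y} := by
    refine (B.finite_spectrum.subset ?_).bddAbove
    rintro t ⟨y, hy, h⟩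
    exact mem_spectrum_of_mulVec_eq_smul hy h
  exact le_csSup hbdd ⟨y, hy, h⟩

lemma dotProduct_mulVec_le_lam1 (hB : B.IsHermitian) (y : V → ℝ) :
    y ⬝ᵥ (B *ᵥ y) ≤ lam1 B * (y ⬝ᵥ y) := by
  set M := lam1 B • (1 : Matrix V V ℝ) - B
  have hM : M.IsHermitian := (isHermitian_one.smul (IsSelfAdjoint.all (lam1 B))).sub hB
  -- an eigenvector of `M` for `μ` is one of `B` for `lam1 B - μ`
  have hM_psd : M.PosSemidef := by
    refine hM.posSemidef_iff_eigenvalues_nonneg.mpr fun i ↦ ?_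
    set b := ⇑(hM.eigenvectorBasis i)
    have hb : b ≠ 0 := by
      simpa [b] using hM.eigenvectorBasis.orthonormal.ne_zero i
    have hBb : B *ᵥ b = (lam1 B - hM.eigenvalues i) • b := by
      have := hM.mulVec_eigenvectorBasis i
      simp only [M, sub_mulVec, smul_mulVec, one_mulVec] at this
      rw [sub_smul, ← this]
      abel
    simpa using le_lam1_of_mulVec_eq_smul hb hBb
  have := hM_psd.dotProduct_mulVec_nonneg y
  simp only [M, star_trivial, sub_mulVec, smul_mulVec, one_mulVec, dotProduct_sub,
    dotProduct_smul, smul_eq_mul] at this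
  linarith

end lam1

section rewire

variable {V R : Type*} [DecidableEq V] [CommRing R]

lemma dotProduct_mulVec_add_vecMulVec_single [Fintype V] (A : Matrix V V R) (u : V)
    (e x : V → R) :
    x ⬝ᵥ ((A + vecMulVec (Pi.single u 1) e + vecMulVec e (Pi.single u 1)) *ᵥ x) =
      x ⬝ᵥ (A *ᵥ x) + 2 * x u * (e ⬝ᵥ x) := by
  simp only [add_mulVec, vecMulVec_mulVec, op_smul_eq_smul, dotProduct_add, dotProduct_smul,
    dotProduct_single_one, single_one_dotProduct, smul_eq_mul, dotProduct_comm x e]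
  ring

variable {G H : SimpleGraph V} [DecidableRel G.Adj] [DecidableRel H.Adj] {u z : V}

lemma adjMatrix_eq_of_rewire (huz : u ≠ z)
    (hH : ∀ a b, H.Adj a b ↔
      ((G.Adj a b ∧ a ≠ u ∧ b ≠ u) ∨ (a = u ∧ b = z) ∨ (a = z ∧ b = u))) :
    H.adjMatrix R = G.adjMatrix R + vecMulVec (Pi.single u 1) (Pi.single z 1 - G.adjMatrix R u)
      + vecMulVec (Pi.single z 1 - G.adjMatrix R u) (Pi.single u 1) := by
  ext a b
  simp only [adjMatrix_apply, hH, Matrix.add_apply, vecMulVec_apply, Pi.sub_apply,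
    Pi.single_apply]
  by_cases ha : a = u <;> by_cases hb : b = u <;> subst_vars <;> simp_all [G.adj_comm b]

lemma dotProduct_adjMatrix_mulVec_of_rewire [Fintype V] (huz : u ≠ z)
    (hH : ∀ a b, H.Adj a b ↔
      ((G.Adj a b ∧ a ≠ u ∧ b ≠ u) ∨ (a = u ∧ b = z) ∨ (a = z ∧ b = u))) (x : V → R) :
    x ⬝ᵥ (H.adjMatrix R *ᵥ x) =
      x ⬝ᵥ (G.adjMatrix R *ᵥ x) + 2 * x u * (x z - ∑ v ∈ G.neighborFinset u, x v) := by
  rw [adjMatrix_eq_of_rewire huz hH, dotProduct_mulVec_add_vecMulVec_single, sub_dotProduct,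
    single_one_dotProduct, ← adjMatrix_mulVec_apply]
  rfl

end rewire

theorem stmt5_general {V : Type*} [Fintype V] (G H : SimpleGraph V)
    (lam : ℝ) (x : V → ℝ)
    (heig : (G.adjMatrix ℝ).mulVec x = lam • x)
    (hpos : ∀ v, 0 < x v) (z u : V) (hz : x z = 1)
    (huz : u ≠ z)
    (hH : ∀ a b, H.Adj a b ↔
      ((G.Adj a b ∧ a ≠ u ∧ b ≠ u) ∨ (a = u ∧ b = z) ∨ (a = z ∧ b = u)))
    (hsum : ∑ v ∈ G.neighborFinset u, x v < 1) :
    lam < lam1 (H.adjMatrix ℝ) := by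
  have hxx : 0 < x ⬝ᵥ x := Finset.sum_pos (fun v _ ↦ mul_pos (hpos v) (hpos v)) ⟨z, mem_univ z⟩
  have hgain : 0 < 2 * x u * (x z - ∑ v ∈ G.neighborFinset u, x v) := by
    have := hpos u
    exact mul_pos (by linarith) (by linarith)
  have hray := dotProduct_mulVec_le_lam1 (isHermitian_iff_isSymm.mpr H.isSymm_adjMatrix) x
  rw [dotProduct_adjMatrix_mulVec_of_rewire huz hH, heig, dotProduct_smul, smul_eq_mul] at hray
  exact lt_of_mul_lt_mul_right (by linarith) hxx.le

theorem stmt5 {V : Type*} [Fintype V] (G H : SimpleGraph V) (hconn : G.Connected)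
    (lam : ℝ) (x : V → ℝ) (hlam : lam = lam1 (G.adjMatrix ℝ))
    (heig : (G.adjMatrix ℝ).mulVec x = lam • x)
    (hpos : ∀ v, 0 < x v) (hle : ∀ v, x v ≤ 1) (z u : V) (hz : x z = 1)
    (huz : u ≠ z) (hnadj : ¬ G.Adj u z)
    (hH : ∀ a b, H.Adj a b ↔
      ((G.Adj a b ∧ a ≠ u ∧ b ≠ u) ∨ (a = u ∧ b = z) ∨ (a = z ∧ b = u)))
    (hsum : ∑ v ∈ G.neighborFinset u, x v < 1) :
    lam < lam1 (H.adjMatrix ℝ) :=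
  stmt5_general G H lam x heig hpos z u hz huz hH hsum
end
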